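/- arXiv:2408.04368 — 5 statements merged into one kernel-verified Lean document; each statement's English description precedes it below -/
import Mathlib

section
/- Let X, Y, Z be nonempty compact convex subsets of real normed spaces, each equipped with the metric induced by the norm. Then the intertwining gap satisfies the relaxed triangle inequality γ(X,Z) ≤ 2·(γ(X,Y) + γ(Y,Z)). -/
/-- A map `f : E → F` is affine on a set `X`:
`f (t•x + (1-t)•x') = t • f x + (1-t) • f x'` for `x, x' ∈ X`, `t ∈ [0,1]`. -/
def AffineOnSet {E F : Type*} [NormedAddCommGroup E] [NormedSpace ℝ E]
    [NormedAddCommGroup F] [NormedSpace ℝ F] (f : E → F) (X : Set E) : Prop :=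
  ∀ x ∈ X, ∀ x' ∈ X, ∀ t ∈ Set.Icc (0 : ℝ) 1,
    f (t • x + (1 - t) • x') = t • f x + (1 - t) • f x'

/-- `Isom_ε(X,Y)` is nonempty: there exists a continuous affine map `f` from `X` to `Y`
that is `ε`-isometric and admits a continuous affine `ε`-inverse `g : Y → X`. -/
def ExistsEpsIsom {E F : Type*} [NormedAddCommGroup E] [NormedSpace ℝ E]
    [NormedAddCommGroup F] [NormedSpace ℝ F] (ε : ℝ) (X : Set E) (Y : Set F) : Prop :=
  ∃ f : E → F, ContinuousOn f X ∧ AffineOnSet f X ∧ f '' X ⊆ Y ∧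
    (∀ x ∈ X, ∀ x' ∈ X, |dist (f x) (f x') - dist x x'| < ε) ∧
    ∃ g : F → E, ContinuousOn g Y ∧ AffineOnSet g Y ∧ g '' Y ⊆ X ∧
      ∀ y ∈ Y, dist (f (g y)) y < ε

/-- The intertwining gap `γ(X,Y) = inf {ε > 0 : Isom_ε(X,Y) ≠ ∅ and Isom_ε(Y,X) ≠ ∅}`. -/
noncomputable def intertwiningGap {E F : Type*} [NormedAddCommGroup E] [NormedSpace ℝ E]
    [NormedAddCommGroup F] [NormedSpace ℝ F] (X : Set E) (Y : Set F) : ℝ :=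
  sInf {ε : ℝ | 0 < ε ∧ ExistsEpsIsom ε X Y ∧ ExistsEpsIsom ε Y X}

lemma existsEpsIsom_mono {E F : Type*} [NormedAddCommGroup E] [NormedSpace ℝ E]
    [NormedAddCommGroup F] [NormedSpace ℝ F] {ε ε' : ℝ} {X : Set E} {Y : Set F}
    (hle : ε ≤ ε') (h : ExistsEpsIsom ε X Y) : ExistsEpsIsom ε' X Y := by
  obtain ⟨f, hfc, hfa, hfi, hfe, g, hgc, hga, hgi, hge⟩ := h
  exact ⟨f, hfc, hfa, hfi, fun x hx x' hx' => lt_of_lt_of_le (hfe x hx x' hx') hle,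
    g, hgc, hga, hgi, fun y hy => lt_of_lt_of_le (hge y hy) hle⟩

lemma existsEpsIsom_comp {E F G : Type*} [NormedAddCommGroup E] [NormedSpace ℝ E]
    [NormedAddCommGroup F] [NormedSpace ℝ F] [NormedAddCommGroup G] [NormedSpace ℝ G]
    {ε₁ ε₂ : ℝ} {X : Set E} {Y : Set F} {Z : Set G} (hZne : Z.Nonempty)
    (h1 : ExistsEpsIsom ε₁ X Y) (h2 : ExistsEpsIsom ε₂ Y Z) :
    ExistsEpsIsom (ε₁ + 2 * ε₂) X Z := by
  obtain ⟨f₁, hf₁c, hf₁a, hf₁i, hf₁e, g₁, hg₁c, hg₁a, hg₁i, hg₁e⟩ := h1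
  obtain ⟨f₂, hf₂c, hf₂a, hf₂i, hf₂e, g₂, hg₂c, hg₂a, hg₂i, hg₂e⟩ := h2
  obtain ⟨z₀, hz₀⟩ := hZne
  have hε₂pos : 0 < ε₂ := lt_of_le_of_lt dist_nonneg (hg₂e z₀ hz₀)
  have hmapsX : ∀ x ∈ X, f₁ x ∈ Y := fun x hx => hf₁i ⟨x, hx, rfl⟩
  have hmapsZ : ∀ z ∈ Z, g₂ z ∈ Y := fun z hz => hg₂i ⟨z, hz, rfl⟩
  refine ⟨f₂ ∘ f₁, hf₂c.comp hf₁c hmapsX, ?_, ?_, ?_, g₁ ∘ g₂,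
    hg₁c.comp hg₂c hmapsZ, ?_, ?_, ?_⟩
  · intro x hx x' hx' t ht
    simp only [Function.comp_apply]
    rw [hf₁a x hx x' hx' t ht, hf₂a _ (hmapsX x hx) _ (hmapsX x' hx') t ht]
  · rintro _ ⟨x, hx, rfl⟩
    exact hf₂i ⟨f₁ x, hmapsX x hx, rfl⟩
  · intro x hx x' hx'
    have h1 := hf₂e _ (hmapsX x hx) _ (hmapsX x' hx')
    have h2 := hf₁e x hx x' hx'
    calc |dist ((f₂ ∘ f₁) x) ((f₂ ∘ f₁) x') - dist x x'|
        ≤ |dist (f₂ (f₁ x)) (f₂ (f₁ x')) - dist (f₁ x) (f₁ x')|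
          + |dist (f₁ x) (f₁ x') - dist x x'| := by
          simpa using abs_sub_le (dist (f₂ (f₁ x)) (f₂ (f₁ x')))
            (dist (f₁ x) (f₁ x')) (dist x x')
      _ < ε₂ + ε₁ := add_lt_add h1 h2
      _ ≤ ε₁ + 2 * ε₂ := by linarith
  · intro z hz z' hz' t ht
    simp only [Function.comp_apply]
    rw [hg₂a z hz z' hz' t ht, hg₁a _ (hmapsZ z hz) _ (hmapsZ z' hz') t ht]
  · rintro _ ⟨z, hz, rfl⟩
    exact hg₁i ⟨g₂ z, hmapsZ z hz, rfl⟩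
  · intro z hz
    have hy : g₂ z ∈ Y := hmapsZ z hz
    have hxy : f₁ (g₁ (g₂ z)) ∈ Y := hmapsX _ (hg₁i ⟨g₂ z, hy, rfl⟩)
    have h1 : dist (f₂ (f₁ (g₁ (g₂ z)))) (f₂ (g₂ z))
        < dist (f₁ (g₁ (g₂ z))) (g₂ z) + ε₂ := by
      have := hf₂e _ hxy _ hy
      have := abs_lt.mp this
      linarith [this.2]
    have h2 : dist (f₁ (g₁ (g₂ z))) (g₂ z) < ε₁ := hg₁e _ hy
    have h3 : dist (f₂ (g₂ z)) z < ε₂ := hg₂e z hz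
    calc dist ((f₂ ∘ f₁) ((g₁ ∘ g₂) z)) z
        ≤ dist (f₂ (f₁ (g₁ (g₂ z)))) (f₂ (g₂ z)) + dist (f₂ (g₂ z)) z :=
          dist_triangle _ _ _
      _ < ε₁ + 2 * ε₂ := by linarith

lemma combo_self {H : Type*} [NormedAddCommGroup H] [NormedSpace ℝ H] (c : H)
    (t : ℝ) : t • c + (1 - t) • c = c := by
  rw [← add_smul]; simp

lemma existsEpsIsom_const {E F : Type*} [NormedAddCommGroup E] [NormedSpace ℝ E]
    [NormedAddCommGroup F] [NormedSpace ℝ F] {X : Set E} {Y : Set F}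
    (hXne : X.Nonempty) (hXc : IsCompact X) (hYne : Y.Nonempty) (hYc : IsCompact Y) :
    ExistsEpsIsom (Metric.diam X + Metric.diam Y + 1) X Y := by
  obtain ⟨x₀, hx₀⟩ := hXne
  obtain ⟨y₀, hy₀⟩ := hYne
  have hdX : 0 ≤ Metric.diam X := Metric.diam_nonneg
  have hdY : 0 ≤ Metric.diam Y := Metric.diam_nonneg
  refine ⟨fun _ => y₀, continuousOn_const, ?_, ?_, ?_, fun _ => x₀,
    continuousOn_const, ?_, ?_, ?_⟩
  · intro x _ x' _ t _; exact (combo_self y₀ t).symm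
  · rintro _ ⟨x, _, rfl⟩; exact hy₀
  · intro x hx x' hx'
    have := Metric.dist_le_diam_of_mem hXc.isBounded hx hx'
    rw [dist_self]
    rw [abs_sub_comm, abs_of_nonneg (by simpa using dist_nonneg)]
    simpa using lt_of_le_of_lt this (by linarith)
  · intro y _ y' _ t _; exact (combo_self x₀ t).symm
  · rintro _ ⟨y, _, rfl⟩; exact hx₀
  · intro y hy
    have := Metric.dist_le_diam_of_mem hYc.isBounded hy₀ hy
    exact lt_of_le_of_lt this (by linarith)

theorem intertwiningGap_relaxed_triangle
    {E F G : Type*} [NormedAddCommGroup E] [NormedSpace ℝ E]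
    [NormedAddCommGroup F] [NormedSpace ℝ F] [NormedAddCommGroup G] [NormedSpace ℝ G]
    (X : Set E) (Y : Set F) (Z : Set G)
    (hXne : X.Nonempty) (hXc : IsCompact X) (hXconv : Convex ℝ X)
    (hYne : Y.Nonempty) (hYc : IsCompact Y) (hYconv : Convex ℝ Y)
    (hZne : Z.Nonempty) (hZc : IsCompact Z) (hZconv : Convex ℝ Z) :
    intertwiningGap X Z ≤ 2 * (intertwiningGap X Y + intertwiningGap Y Z) := by
  set SXY := {ε : ℝ | 0 < ε ∧ ExistsEpsIsom ε X Y ∧ ExistsEpsIsom ε Y X} with hSXY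
  set SYZ := {ε : ℝ | 0 < ε ∧ ExistsEpsIsom ε Y Z ∧ ExistsEpsIsom ε Z Y} with hSYZ
  set SXZ := {ε : ℝ | 0 < ε ∧ ExistsEpsIsom ε X Z ∧ ExistsEpsIsom ε Z X} with hSXZ
  have hXYne : SXY.Nonempty := by
    refine ⟨Metric.diam X + Metric.diam Y + 1, ?_, ?_, ?_⟩
    · have := Metric.diam_nonneg (s := X); have := Metric.diam_nonneg (s := Y); linarith
    · exact existsEpsIsom_const hXne hXc hYne hYc
    · exact existsEpsIsom_mono (by rw [add_comm (Metric.diam X)])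
        (existsEpsIsom_const hYne hYc hXne hXc)
  have hYZne : SYZ.Nonempty := by
    refine ⟨Metric.diam Y + Metric.diam Z + 1, ?_, ?_, ?_⟩
    · have := Metric.diam_nonneg (s := Y); have := Metric.diam_nonneg (s := Z); linarith
    · exact existsEpsIsom_const hYne hYc hZne hZc
    · exact existsEpsIsom_mono (by rw [add_comm (Metric.diam Y)])
        (existsEpsIsom_const hZne hZc hYne hYc)
  have hbddXZ : BddBelow SXZ := ⟨0, fun ε hε => hε.1.le⟩
  refine le_of_forall_pos_le_add fun δ hδ => ?_
  obtain ⟨ε₁, hε₁S, hε₁⟩ := Real.lt_sInf_add_pos hXYne (show (0:ℝ) < δ/4 by linarith)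
  obtain ⟨ε₂, hε₂S, hε₂⟩ := Real.lt_sInf_add_pos hYZne (show (0:ℝ) < δ/4 by linarith)
  obtain ⟨hε₁pos, h₁XY, h₁YX⟩ := hε₁S
  obtain ⟨hε₂pos, h₂YZ, h₂ZY⟩ := hε₂S
  have hmem : 2 * (ε₁ + ε₂) ∈ SXZ := by
    refine ⟨by linarith, ?_, ?_⟩
    · exact existsEpsIsom_mono (by linarith)
        (existsEpsIsom_comp hZne h₁XY h₂YZ)
    · exact existsEpsIsom_mono (by linarith)
        (existsEpsIsom_comp hXne h₂ZY h₁YX)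
  have h1 : intertwiningGap X Z ≤ 2 * (ε₁ + ε₂) := csInf_le hbddXZ hmem
  have h2 : intertwiningGap X Y = sInf SXY := rfl
  have h3 : intertwiningGap Y Z = sInf SYZ := rfl
  rw [h2, h3]
  linarith
end

section
/- Let E be a real normed space, K ⊆ E a nonempty compact convex subset, ε ≥ 0, and f : K → E a continuous map which is affine, i.e. f(t·x + (1−t)·y) = t·f(x) + (1−t)·f(y) for all x, y ∈ K and t ∈ [0,1]. If ‖x − f(x)‖ ≤ ε for every extreme point x of K, then ‖x − f(x)‖ ≤ ε for every x ∈ K. -/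
theorem norm_sub_affine_le_of_extremePoints
    {E : Type*} [NormedAddCommGroup E] [NormedSpace ℝ E]
    (K : Set E) (hKne : K.Nonempty) (hKc : IsCompact K) (hKconv : Convex ℝ K)
    (ε : ℝ) (hε : 0 ≤ ε) (f : E → E) (hfc : ContinuousOn f K)
    (hfaff : ∀ x ∈ K, ∀ y ∈ K, ∀ t ∈ Set.Icc (0 : ℝ) 1,
      f (t • x + (1 - t) • y) = t • f x + (1 - t) • f y)
    (hext : ∀ x ∈ K.extremePoints ℝ, ‖x - f x‖ ≤ ε) :
    ∀ x ∈ K, ‖x - f x‖ ≤ ε := by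
  set S : Set E := {x ∈ K | ‖x - f x‖ ≤ ε} with hS
  have hSconv : Convex ℝ S := by
    intro x hx y hy a b ha hb hab
    have hb' : b = 1 - a := by linarith
    subst hb'
    have hmem : a • x + (1 - a) • y ∈ K := hKconv hx.1 hy.1 ha hb hab
    refine ⟨hmem, ?_⟩
    rw [hfaff x hx.1 y hy.1 a ⟨ha, by linarith⟩]
    have : a • x + (1 - a) • y - (a • f x + (1 - a) • f y)
        = a • (x - f x) + (1 - a) • (y - f y) := by
      simp [smul_sub]; abel
    rw [this]
    calc ‖a • (x - f x) + (1 - a) • (y - f y)‖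
        ≤ ‖a • (x - f x)‖ + ‖(1 - a) • (y - f y)‖ := norm_add_le _ _
      _ = a * ‖x - f x‖ + (1 - a) * ‖y - f y‖ := by
          rw [norm_smul, norm_smul, Real.norm_of_nonneg ha, Real.norm_of_nonneg hb]
      _ ≤ a * ε + (1 - a) * ε := by
          gcongr <;> [exact hx.2; exact hy.2]
      _ = ε := by ring
  have hSclosed : IsClosed S := by
    have : S = K ∩ (fun x => ‖x - f x‖) ⁻¹' Set.Iic ε := rfl
    rw [this]
    exact ContinuousOn.preimage_isClosed_of_isClosed
      (((continuousOn_id).sub hfc).norm) hKc.isClosed isClosed_Iic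
  have hsub : K ⊆ S := by
    rw [← closure_convexHull_extremePoints hKc hKconv]
    exact closure_minimal (convexHull_min (fun x hx => ⟨hx.1, hext x hx⟩) hSconv) hSclosed
  exact fun x hx => (hsub hx).2
end

section
/- Let E be a real normed space, S ⊆ E a nonempty compact subset, Y ⊆ E a convex subset, and ε > 0. Suppose that for every x ∈ S there exists y ∈ Y with ‖x − y‖ < ε. Then there exists a continuous map f : S → E with f(x) ∈ Y and ‖x − f(x)‖ < ε for every x ∈ S. -/
theorem exists_continuous_approximate_selection
    {E : Type*} [NormedAddCommGroup E] [NormedSpace ℝ E]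
    (S Y : Set E) (hSne : S.Nonempty) (hSc : IsCompact S) (hYconv : Convex ℝ Y)
    (ε : ℝ) (hε : 0 < ε) (happrox : ∀ x ∈ S, ∃ y ∈ Y, ‖x - y‖ < ε) :
    ∃ f : S → E, Continuous f ∧ ∀ x : S, f x ∈ Y ∧ ‖(x : E) - f x‖ < ε := by
  obtain ⟨g, hg⟩ := exists_continuous_forall_mem_convex_of_local
    (t := fun x : S => Y ∩ Metric.ball (x : E) ε)
    (fun x => hYconv.inter (convex_ball _ _))
    (by
      intro x
      obtain ⟨y, hyY, hxy⟩ := happrox x x.2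
      refine ⟨{x' : S | ‖(x' : E) - y‖ < ε}, ?_, fun _ => y, continuousOn_const, ?_⟩
      · exact IsOpen.mem_nhds (isOpen_lt (by continuity) continuous_const) hxy
      · intro z hz
        exact ⟨hyY, by simpa [Metric.mem_ball, dist_eq_norm, norm_sub_rev] using hz⟩)
  refine ⟨g, g.continuous, fun x => ⟨(hg x).1, ?_⟩⟩
  have := (hg x).2
  simpa [Metric.mem_ball, dist_eq_norm, norm_sub_rev] using this
end

section
/- Let X be a nonempty set, r > 0, and let ρ and ρ' be two metrics on X such that k·ρ(x,y) ≤ ρ'(x,y) ≤ K·ρ(x,y) for all x, y ∈ X, where 0 < k ≤ 1 ≤ K. For a metric σ on X let 𝓛_r(σ) = {f : X → ℝ : |f(x)| ≤ r for all x, and |f(x) − f(y)| ≤ σ(x,y) for all x, y}. Then, in the space of bounded real-valued functions on X with the supremum metric, the Hausdorff distance between 𝓛_r(ρ) and 𝓛_r(ρ') is at most r·max(1 − k, 1 − 1/K). -/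
open scoped ENNReal
/-- The set `𝓛_r(σ)` of functions bounded by `r` and Lipschitz with respect to `σ`,
viewed inside the space `ℓ^∞(X)` of bounded real functions with the sup norm. -/
def boundedLipSet {X : Type*} (r : ℝ) (σ : X → X → ℝ) : Set (lp (fun _ : X => ℝ) ∞) :=
  {F | (∀ x, |F x| ≤ r) ∧ ∀ x y, |F x - F y| ≤ σ x y}

theorem hausdorffDist_boundedLipSet_le {X : Type*} [Nonempty X]
    (r : ℝ) (hr : 0 < r) (ρ ρ' : X → X → ℝ)
    -- ρ is a metric
    (hρ_self : ∀ x, ρ x x = 0) (hρ_eq : ∀ x y, ρ x y = 0 → x = y)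
    (hρ_symm : ∀ x y, ρ x y = ρ y x) (hρ_tri : ∀ x y z, ρ x z ≤ ρ x y + ρ y z)
    -- ρ' is a metric
    (hρ'_self : ∀ x, ρ' x x = 0) (hρ'_eq : ∀ x y, ρ' x y = 0 → x = y)
    (hρ'_symm : ∀ x y, ρ' x y = ρ' y x) (hρ'_tri : ∀ x y z, ρ' x z ≤ ρ' x y + ρ' y z)
    (k K : ℝ) (hk : 0 < k) (hk1 : k ≤ 1) (hK : 1 ≤ K)
    (hcomp : ∀ x y, k * ρ x y ≤ ρ' x y ∧ ρ' x y ≤ K * ρ x y) :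
    Metric.hausdorffDist (boundedLipSet r ρ) (boundedLipSet r ρ') ≤
      r * max (1 - k) (1 - 1 / K) := by
  have hK0 : (0:ℝ) < K := lt_of_lt_of_le one_pos hK
  have hbnd : 0 ≤ r * max (1 - k) (1 - 1 / K) := by
    apply mul_nonneg hr.le
    refine le_max_of_le_left ?_
    linarith
  apply Metric.hausdorffDist_le_of_mem_dist hbnd
  · -- F ∈ 𝓛_r(ρ), take k • F ∈ 𝓛_r(ρ')
    rintro F ⟨hFb, hFl⟩
    refine ⟨k • F, ⟨?_, ?_⟩, ?_⟩
    · intro x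
      simp only [lp.coeFn_smul, Pi.smul_apply, smul_eq_mul, abs_mul, abs_of_pos hk]
      calc k * |F x| ≤ 1 * r := by
            apply mul_le_mul hk1 (hFb x) (abs_nonneg _) zero_le_one
        _ = r := one_mul r
    · intro x y
      have : (k • F) x - (k • F) y = k * (F x - F y) := by
        simp only [lp.coeFn_smul, Pi.smul_apply, smul_eq_mul]; ring
      rw [this, abs_mul, abs_of_pos hk]
      calc k * |F x - F y| ≤ k * ρ x y :=
            mul_le_mul_of_nonneg_left (hFl x y) hk.le
        _ ≤ ρ' x y := (hcomp x y).1
    · rw [dist_eq_norm]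
      apply lp.norm_le_of_forall_le hbnd
      intro x
      have : (F - k • F) x = (1 - k) * F x := by
        simp only [lp.coeFn_sub, lp.coeFn_smul, Pi.sub_apply, Pi.smul_apply, smul_eq_mul]; ring
      rw [Real.norm_eq_abs, this, abs_mul, abs_of_nonneg (by linarith : (0:ℝ) ≤ 1 - k)]
      calc (1 - k) * |F x| ≤ (1 - k) * r :=
            mul_le_mul_of_nonneg_left (hFb x) (by linarith)
        _ = r * (1 - k) := mul_comm _ _
        _ ≤ r * max (1 - k) (1 - 1 / K) :=
            mul_le_mul_of_nonneg_left (le_max_left _ _) hr.le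
  · -- F ∈ 𝓛_r(ρ'), take (1/K) • F ∈ 𝓛_r(ρ)
    rintro F ⟨hFb, hFl⟩
    have hKi : (0:ℝ) < 1 / K := by positivity
    have hKi1 : 1 / K ≤ 1 := by
      rw [div_le_one hK0]; exact hK
    refine ⟨(1/K) • F, ⟨?_, ?_⟩, ?_⟩
    · intro x
      simp only [lp.coeFn_smul, Pi.smul_apply, smul_eq_mul, abs_mul, abs_of_pos hKi]
      calc (1/K) * |F x| ≤ 1 * r :=
            mul_le_mul hKi1 (hFb x) (abs_nonneg _) zero_le_one
        _ = r := one_mul r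
    · intro x y
      have : ((1/K) • F) x - ((1/K) • F) y = (1/K) * (F x - F y) := by
        simp only [lp.coeFn_smul, Pi.smul_apply, smul_eq_mul]; ring
      rw [this, abs_mul, abs_of_pos hKi]
      calc (1/K) * |F x - F y| ≤ (1/K) * (K * ρ x y) :=
            mul_le_mul_of_nonneg_left ((hFl x y).trans (hcomp x y).2) hKi.le
        _ = ρ x y := by field_simp
    · rw [dist_eq_norm]
      apply lp.norm_le_of_forall_le hbnd
      intro x
      have : (F - (1/K) • F) x = (1 - 1/K) * F x := by
        simp only [lp.coeFn_sub, lp.coeFn_smul, Pi.sub_apply, Pi.smul_apply, smul_eq_mul]; ring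
      rw [Real.norm_eq_abs, this, abs_mul, abs_of_nonneg (by linarith : (0:ℝ) ≤ 1 - 1/K)]
      calc (1 - 1/K) * |F x| ≤ (1 - 1/K) * r :=
            mul_le_mul_of_nonneg_left (hFb x) (by linarith)
        _ = r * (1 - 1/K) := mul_comm _ _
        _ ≤ r * max (1 - k) (1 - 1/K) :=
            mul_le_mul_of_nonneg_left (le_max_right _ _) hr.le
end

section
/- Let (X,ρ) be a nonempty compact metric space, n ≥ 1, and r ≥ diam(X)/2, where diam(X) = sup{ρ(x,y) : x, y ∈ X}. Give the n×n complex matrices M_n(ℂ) the operator norm, and write tr̄(M) for the trace of M divided by n. Let f : X → M_n(ℂ) be continuous with f(x) Hermitian for every x ∈ X. Then the function x ↦ tr̄(f(x)) satisfies |tr̄(f(x)) − tr̄(f(y))| ≤ ρ(x,y) for all x, y ∈ X if and only if there exist a continuous map g : X → M_n(ℂ) with g(x) Hermitian, ‖g(x)‖ ≤ r and ‖g(x) − g(y)‖ ≤ ρ(x,y) for all x, y ∈ X, a real number c, and a continuous map h : X → M_n(ℂ) with h(x) Hermitian and trace(h(x)) = 0 for all x ∈ X, such that f(x) = g(x) +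 c·1_n + h(x) for all x ∈ X (1_n being the identity matrix). -/
open Matrix
open scoped Matrix.Norms.L2Operator

private lemma coord_le' (n : ℕ) (v : EuclideanSpace ℂ (Fin n)) (i : Fin n) : ‖v i‖ ≤ ‖v‖ := by
  rw [EuclideanSpace.norm_eq]
  refine Real.le_sqrt (norm_nonneg _) (by positivity) |>.mpr ?_
  calc ‖v i‖ ^ 2 = ∑ j ∈ {i}, ‖v j‖ ^ 2 := by simp
  _ ≤ ∑ j, ‖v j‖ ^ 2 := Finset.sum_le_sum_of_subset_of_nonneg (Finset.subset_univ _)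
      (fun j _ _ => by positivity)

private lemma entry_le' (n : ℕ) (A : Matrix (Fin n) (Fin n) ℂ) (i : Fin n) :
    ‖A i i‖ ≤ ‖A‖ := by
  classical
  set v : EuclideanSpace ℂ (Fin n) := EuclideanSpace.single i (1:ℂ)
  have h1 : A i i = ((EuclideanSpace.equiv (Fin n) ℂ).symm (A *ᵥ v)) i := by
    show A i i = (A *ᵥ v) i
    simp [v, Matrix.mulVec, dotProduct, EuclideanSpace.single_apply]
  rw [h1]
  calc ‖((EuclideanSpace.equiv (Fin n) ℂ).symm (A *ᵥ v)) i‖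
      ≤ ‖(EuclideanSpace.equiv (Fin n) ℂ).symm (A *ᵥ v)‖ := coord_le' n _ i
    _ ≤ ‖A‖ * ‖v‖ := A.l2_opNorm_mulVec v
    _ = ‖A‖ := by simp [v, EuclideanSpace.norm_single]

private lemma trace_le' (n : ℕ) (A : Matrix (Fin n) (Fin n) ℂ) :
    ‖A.trace‖ ≤ n * ‖A‖ := by
  calc ‖A.trace‖ ≤ ∑ i, ‖A i i‖ := by
        simpa [Matrix.trace, Matrix.diag] using
          (norm_sum_le Finset.univ (fun i => A i i))
    _ ≤ ∑ _i : Fin n, ‖A‖ := Finset.sum_le_sum fun i _ => entry_le' n A i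
    _ = n * ‖A‖ := by simp [mul_comm]

private lemma herm_smul_one (n : ℕ) (a : ℝ) :
    ((a : ℂ) • (1 : Matrix (Fin n) (Fin n) ℂ)).IsHermitian := by
  unfold Matrix.IsHermitian
  rw [Matrix.conjTranspose_smul, Matrix.conjTranspose_one]
  simp


open Matrix in
/-- Characterisation of tracially Lipschitz elements of `C(X, Mₙ(ℂ))`: the normalised trace
of `f` is 1-Lipschitz iff `f` decomposes as a norm-Lipschitz `r`-bounded Hermitian part, a
real multiple of the identity, and a pointwise trace-zero Hermitian part. -/
theorem tracially_lipschitz_iff_decomposition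
    {X : Type*} [MetricSpace X] [CompactSpace X] [Nonempty X]
    (n : ℕ) (hn : 1 ≤ n) (r : ℝ) (hr : Metric.diam (Set.univ : Set X) / 2 ≤ r)
    (f : X → Matrix (Fin n) (Fin n) ℂ) (hfc : Continuous f)
    (hfherm : ∀ x, (f x).IsHermitian) :
    (∀ x y : X, ‖(f x).trace / n - (f y).trace / n‖ ≤ dist x y) ↔
      ∃ (g : X → Matrix (Fin n) (Fin n) ℂ) (c : ℝ) (h : X → Matrix (Fin n) (Fin n) ℂ),
        Continuous g ∧ (∀ x, (g x).IsHermitian) ∧ (∀ x, ‖g x‖ ≤ r) ∧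
        (∀ x y : X, ‖g x - g y‖ ≤ dist x y) ∧
        Continuous h ∧ (∀ x, (h x).IsHermitian) ∧ (∀ x, (h x).trace = 0) ∧
        ∀ x, f x = g x + (c : ℂ) • (1 : Matrix (Fin n) (Fin n) ℂ) + h x := by
  haveI : Nonempty (Fin n) := Fin.pos_iff_nonempty.mp hn
  haveI : Nontrivial (Matrix (Fin n) (Fin n) ℂ) := by unfold Matrix; infer_instance
  have hn0 : (n : ℂ) ≠ 0 := Nat.cast_ne_zero.mpr (by omega)
  have hn0' : (0:ℝ) < n := by exact_mod_cast Nat.pos_of_ne_zero (by omega)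
  have hnorm1 : ‖(1 : Matrix (Fin n) (Fin n) ℂ)‖ = 1 := CStarRing.norm_one
  -- the normalised trace is real
  have htr_real : ∀ x, (f x).trace = ((((f x).trace.re : ℝ)) : ℂ) := by
    intro x
    have h1 : star (f x).trace = (f x).trace := by
      rw [← Matrix.trace_conjTranspose, hfherm x]
    exact (Complex.conj_eq_iff_re.mp h1).symm
  set φ : X → ℝ := fun x => (f x).trace.re / n with hφdef
  have hτ : ∀ x, (f x).trace / n = ((φ x : ℝ) : ℂ) := by
    intro x
    rw [htr_real x]
    push_cast [hφdef]
    rfl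
  have htrace_eq : ∀ x, (f x).trace = ((φ x : ℝ) : ℂ) * n := by
    intro x
    rw [← hτ x, div_mul_cancel₀ _ hn0]
  constructor
  · -- hard direction
    intro hf
    have hφlip : ∀ x y, |φ x - φ y| ≤ dist x y := by
      intro x y
      have := hf x y
      rw [hτ x, hτ y] at this
      rw [← Real.norm_eq_abs, ← Complex.norm_real]
      push_cast
      exact this
    -- continuity of φ
    have hφcont : Continuous φ := by
      have h1 : Continuous fun x => (f x).trace := by
        exact ((Matrix.traceLinearMap (Fin n) ℂ ℂ).continuous_of_finiteDimensional).comp hfc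
      exact (Complex.continuous_re.comp h1).div_const n
    -- extremes
    obtain ⟨xM, -, hxM⟩ := isCompact_univ.exists_isMaxOn (Set.univ_nonempty)
      hφcont.continuousOn
    obtain ⟨xm, -, hxm⟩ := isCompact_univ.exists_isMinOn (Set.univ_nonempty)
      hφcont.continuousOn
    have hMm : φ xM - φ xm ≤ Metric.diam (Set.univ : Set X) := by
      refine le_trans ?_ (Metric.dist_le_diam_of_mem isCompact_univ.isBounded (Set.mem_univ xM)
        (Set.mem_univ xm))
      have := hφlip xM xm
      exact (le_abs_self _).trans this
    set c : ℝ := (φ xM + φ xm) / 2 with hc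
    have hbound : ∀ x, |φ x - c| ≤ r := by
      intro x
      have h1 : φ x ≤ φ xM := hxM (Set.mem_univ x)
      have h2 : φ xm ≤ φ x := hxm (Set.mem_univ x)
      have : |φ x - c| ≤ (φ xM - φ xm) / 2 := by
        rw [abs_le]; constructor <;> (rw [hc]; linarith)
      refine this.trans (le_trans ?_ hr)
      linarith
    refine ⟨fun x => ((φ x - c : ℝ) : ℂ) • 1, c, fun x => f x - ((φ x : ℝ) : ℂ) • 1,
      ?_, fun x => herm_smul_one n _, ?_, ?_, ?_, ?_, ?_, ?_⟩
    · exact (Complex.continuous_ofReal.comp (hφcont.sub continuous_const)).smul continuous_const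
    · intro x
      rw [norm_smul, hnorm1, mul_one, Complex.norm_real, Real.norm_eq_abs]
      exact hbound x
    · intro x y
      rw [← sub_smul]
      rw [norm_smul, hnorm1, mul_one]
      calc ‖((φ x - c : ℝ) : ℂ) - ((φ y - c : ℝ) : ℂ)‖
          = |φ x - φ y| := by
            rw [← Complex.ofReal_sub, Complex.norm_real, Real.norm_eq_abs]
            congr 1
            ring
        _ ≤ dist x y := hφlip x y
    · exact hfc.sub ((Complex.continuous_ofReal.comp hφcont).smul continuous_const)
    · intro x
      exact Matrix.IsHermitian.sub (hfherm x) (herm_smul_one n _)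
    · intro x
      rw [Matrix.trace_sub, Matrix.trace_smul, Matrix.trace_one, htrace_eq x]
      simp
    · intro x
      show f x = ((φ x - c : ℝ) : ℂ) • 1 + (c : ℂ) • 1 + (f x - ((φ x : ℝ) : ℂ) • 1)
      rw [show ((φ x - c : ℝ) : ℂ) = ((φ x : ℝ) : ℂ) - (c : ℂ) by push_cast; ring, sub_smul]
      abel
  · -- easy direction
    rintro ⟨g, c, h, -, -, -, hglip, -, -, htr0, hdecomp⟩ x y
    have hτg : ∀ z, (f z).trace / n = (g z).trace / n + c := by
      intro z
      rw [hdecomp z]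
      rw [Matrix.trace_add, Matrix.trace_add, Matrix.trace_smul, Matrix.trace_one, htr0 z]
      field_simp
      simp [Fintype.card_fin, smul_eq_mul, mul_comm]
    rw [hτg x, hτg y]
    have h1 : (g x).trace / n + c - ((g y).trace / n + c) = (g x - g y).trace / n := by
      rw [Matrix.trace_sub]; ring
    rw [h1]
    rw [norm_div, Complex.norm_natCast]
    rw [div_le_iff₀ hn0']
    calc ‖(g x - g y).trace‖ ≤ n * ‖g x - g y‖ := trace_le' n _
      _ ≤ n * dist x y := by
          have := hglip x y
          nlinarith [norm_nonneg (g x - g y)]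
      _ = dist x y * n := by ring
end
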